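/- Let f be a PWL circle homeomorphism with rational rotation number p/q. If the number of break points of f^k is uniformly bounded over all k ≥ 1, then every break point of f lies on a periodic orbit, and hence f is conjugate to the rigid rotation by p/q. -/

import Mathlib

open MeasureTheory Filter Set

/-- A lift of an orientation-preserving circle homeomorphism. -/
def IsLift (F : ℝ → ℝ) : Prop :=
  Continuous F ∧ StrictMono F ∧ ∀ x, F (x + 1) = F x + 1

/-- `b` is a break point of `F`: one-sided derivatives exist and differ. -/
def IsBreakPoint (F : ℝ → ℝ) (b : ℝ) : Prop :=
  ∃ dm dp : ℝ, dm ≠ dp ∧ HasDerivWithinAt F dm (Set.Iic b) b ∧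
    HasDerivWithinAt F dp (Set.Ici b) b

/-- `F` is a piecewise linear lift with break point set `B ⊆ [0,1)`:
it is a lift, each point of `B` is a break point, and `F` is affine near any
point not congruent (mod 1) to a break point. -/
def IsPWLLift (F : ℝ → ℝ) (B : Finset ℝ) : Prop :=
  IsLift F ∧ (↑B : Set ℝ) ⊆ Set.Ico (0 : ℝ) 1 ∧
  (∀ b ∈ B, IsBreakPoint F b) ∧
  (∀ x : ℝ, (∀ b ∈ B, ∀ k : ℤ, x ≠ b + k) →
    ∃ ε > 0, ∃ a c : ℝ, ∀ y, |y - x| < ε → F y = a * y + c)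

/-- The rotation number of the lift `F` is `ρ`. -/
def HasRotNum (F : ℝ → ℝ) (ρ : ℝ) : Prop :=
  ∀ x : ℝ, Filter.Tendsto (fun m : ℕ => (F^[m] x - x) / m) Filter.atTop (nhds ρ)

/-- `b` and `b'` lie on the same orbit of the circle map induced by the lift `F`. -/
def SameOrbit (F : ℝ → ℝ) (b b' : ℝ) : Prop :=
  ∃ j : ℕ, ∃ m : ℤ, F^[j] b = b' + m ∨ F^[j] b' = b + m

/-!
Put `G = F^q - p`, a lift with a fixed point, and suppose `G ≠ id`. A gap `(u, v)` of the
fixed-point set of `G` is mapped to itself, and `G` has no periodic points there, so the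
`G`-orbits in the gap are injective bi-infinite sequences. The ratios `D₋G / D₊G` of one-sided
slopes over the breaks of `G` in the gap telescope to `D₊G(u) / D₋G(v)`, which is not `1` because
`G - id` does not vanish on `(u, v)`; hence the ratios along some single orbit have product `≠ 1`.
By the chain rule the ratio of `G^n` at `x` is the product of the ratios at `x, …, G^{n-1} x`, so
arbitrarily many points far back on that orbit are breaks of one iterate `G^n`, and they stay
distinct modulo `1` since `v ≤ u + 1`. As `F^{qn} = G^n + np`, this contradicts the bound. Thus
`F^q = id + p`, and the average of `F^i`, `i < q`, conjugates `F` to the rotation by `p / q`.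
-/

open Topology Function

noncomputable section

def leftSlope (H : ℝ → ℝ) (x : ℝ) : ℝ := derivWithin H (Iic x) x

def rightSlope (H : ℝ → ℝ) (x : ℝ) : ℝ := derivWithin H (Ici x) x

def breakRatio (H : ℝ → ℝ) (x : ℝ) : ℝ := leftSlope H x / rightSlope H x

end

def IsIncreasingPWL (H : ℝ → ℝ) : Prop :=
  ∀ x, (∃ a > 0, ∃ c, ∀ᶠ y in 𝓝[≤] x, H y = a * y + c) ∧
    ∃ a > 0, ∃ c, ∀ᶠ y in 𝓝[≥] x, H y = a * y + c

section Slopes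

variable {H H₁ H₂ : ℝ → ℝ} {s t : Set ℝ} {x a b c d : ℝ}

theorem hasDerivWithinAt_of_eventually_affine (h : ∀ᶠ y in 𝓝[s] x, H y = a * y + c)
    (hx : x ∈ s) : HasDerivWithinAt H a s x := by
  have hA : HasDerivWithinAt (fun y => a * y + c) a s x := by
    simpa using ((hasDerivAt_id' x).const_mul a).add_const c |>.hasDerivWithinAt
  exact hA.congr_of_eventuallyEq h (h.self_of_nhdsWithin hx)

theorem leftSlope_eq_of_eventually (h : ∀ᶠ y in 𝓝[≤] x, H y = a * y + c) :
    leftSlope H x = a :=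
  (hasDerivWithinAt_of_eventually_affine h self_mem_Iic).derivWithin (uniqueDiffWithinAt_Iic x)

theorem rightSlope_eq_of_eventually (h : ∀ᶠ y in 𝓝[≥] x, H y = a * y + c) :
    rightSlope H x = a :=
  (hasDerivWithinAt_of_eventually_affine h self_mem_Ici).derivWithin (uniqueDiffWithinAt_Ici x)

theorem leftSlope_add_const (c : ℝ) : leftSlope (fun y => H y + c) x = leftSlope H x :=
  derivWithin_add_const c

theorem rightSlope_add_const (c : ℝ) : rightSlope (fun y => H y + c) x = rightSlope H x :=
  derivWithin_add_const c

theorem breakRatio_add_const (c : ℝ) : breakRatio (fun y => H y + c) x = breakRatio H x := by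
  rw [breakRatio, breakRatio, leftSlope_add_const, rightSlope_add_const]

theorem leftSlope_add_of_map_add {k : ℝ} (h : ∀ y, H (y + k) = H y + k) :
    leftSlope H (x + k) = leftSlope H x := by
  have := derivWithin_comp_add_const (f := H) (a := k) (s := Iic x) (x := x)
  rw [← image_vadd] at this
  simp only [vadd_eq_add, add_comm k, image_add_const_Iic] at this
  simp_rw [leftSlope, ← this, h]
  exact derivWithin_add_const k

theorem rightSlope_add_of_map_add {k : ℝ} (h : ∀ y, H (y + k) = H y + k) :
    rightSlope H (x + k) = rightSlope H x := by
  have := derivWithin_comp_add_const (f := H) (a := k) (s := Ici x) (x := x)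
  rw [← image_vadd] at this
  simp only [vadd_eq_add, add_comm k, image_add_const_Ici] at this
  simp_rw [rightSlope, ← this, h]
  exact derivWithin_add_const k

theorem breakRatio_add_of_map_add {k : ℝ} (h : ∀ y, H (y + k) = H y + k) :
    breakRatio H (x + k) = breakRatio H x := by
  rw [breakRatio, breakRatio, leftSlope_add_of_map_add h, rightSlope_add_of_map_add h]

theorem eventually_affine_comp (h₂ : ∀ᶠ y in 𝓝[t] (H₁ x), H₂ y = b * y + d)
    (h₁ : ∀ᶠ y in 𝓝[s] x, H₁ y = a * y + c) (hmaps : MapsTo H₁ s t)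
    (hc : ContinuousWithinAt H₁ s x) :
    ∀ᶠ y in 𝓝[s] x, (H₂ ∘ H₁) y = (b * a) * y + (b * c + d) := by
  filter_upwards [h₁, (hc.tendsto_nhdsWithin hmaps).eventually h₂] with y h1 h2
  rw [comp_apply, h2, h1]
  ring

theorem isIncreasingPWL_id : IsIncreasingPWL id := fun _ =>
  ⟨⟨1, one_pos, 0, .of_forall fun y => by simp⟩, 1, one_pos, 0, .of_forall fun y => by simp⟩

namespace IsIncreasingPWL

theorem left (hH : IsIncreasingPWL H) (x : ℝ) :
    0 < leftSlope H x ∧ ∃ c, ∀ᶠ y in 𝓝[≤] x, H y = leftSlope H x * y + c := by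
  obtain ⟨⟨a, ha, c, h⟩, -⟩ := hH x
  rw [leftSlope_eq_of_eventually h]
  exact ⟨ha, c, h⟩

theorem right (hH : IsIncreasingPWL H) (x : ℝ) :
    0 < rightSlope H x ∧ ∃ c, ∀ᶠ y in 𝓝[≥] x, H y = rightSlope H x * y + c := by
  obtain ⟨-, a, ha, c, h⟩ := hH x
  rw [rightSlope_eq_of_eventually h]
  exact ⟨ha, c, h⟩

theorem add_const (hH : IsIncreasingPWL H) (c : ℝ) : IsIncreasingPWL (fun y => H y + c) := by
  intro x
  obtain ⟨⟨a, ha, d, hl⟩, a', ha', d', hr⟩ := hH x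
  exact ⟨⟨a, ha, d + c, hl.mono fun y hy => by simp only [hy]; ring⟩,
    a', ha', d' + c, hr.mono fun y hy => by simp only [hy]; ring⟩

variable (h₂ : IsIncreasingPWL H₂) (h₁ : IsIncreasingPWL H₁) (hc : Continuous H₁)
  (hm : Monotone H₁)
include h₂ h₁ hc hm

theorem leftSlope_comp (x : ℝ) :
    leftSlope (H₂ ∘ H₁) x = leftSlope H₂ (H₁ x) * leftSlope H₁ x := by
  obtain ⟨-, c, hl₁⟩ := h₁.left x
  obtain ⟨-, d, hl₂⟩ := h₂.left (H₁ x)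
  exact leftSlope_eq_of_eventually
    (eventually_affine_comp hl₂ hl₁ (fun _ hy => hm hy) hc.continuousWithinAt)

theorem rightSlope_comp (x : ℝ) :
    rightSlope (H₂ ∘ H₁) x = rightSlope H₂ (H₁ x) * rightSlope H₁ x := by
  obtain ⟨-, c, hr₁⟩ := h₁.right x
  obtain ⟨-, d, hr₂⟩ := h₂.right (H₁ x)
  exact rightSlope_eq_of_eventually
    (eventually_affine_comp hr₂ hr₁ (fun _ hy => hm hy) hc.continuousWithinAt)

theorem comp : IsIncreasingPWL (H₂ ∘ H₁) := by
  intro x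
  obtain ⟨hl₁pos, c, hl₁⟩ := h₁.left x
  obtain ⟨hl₂pos, d, hl₂⟩ := h₂.left (H₁ x)
  obtain ⟨hr₁pos, c', hr₁⟩ := h₁.right x
  obtain ⟨hr₂pos, d', hr₂⟩ := h₂.right (H₁ x)
  exact ⟨⟨_, mul_pos hl₂pos hl₁pos, _,
      eventually_affine_comp hl₂ hl₁ (fun _ hy => hm hy) hc.continuousWithinAt⟩,
    _, mul_pos hr₂pos hr₁pos, _,
      eventually_affine_comp hr₂ hr₁ (fun _ hy => hm hy) hc.continuousWithinAt⟩

theorem breakRatio_comp (x : ℝ) :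
    breakRatio (H₂ ∘ H₁) x = breakRatio H₂ (H₁ x) * breakRatio H₁ x := by
  rw [breakRatio, breakRatio, breakRatio, leftSlope_comp h₂ h₁ hc hm,
    rightSlope_comp h₂ h₁ hc hm, mul_div_mul_comm]

omit h₂ h₁ hc hm

theorem iterate (hH : IsIncreasingPWL H) (hc : Continuous H) (hm : Monotone H) (n : ℕ) :
    IsIncreasingPWL H^[n] := by
  induction n with
  | zero => exact isIncreasingPWL_id
  | succ n ih => rw [iterate_succ']; exact hH.comp ih (hc.iterate n) (hm.iterate n)

theorem breakRatio_iterate (hH : IsIncreasingPWL H) (hc : Continuous H) (hm : Monotone H)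
    (n : ℕ) (x : ℝ) : breakRatio H^[n] x = ∏ i ∈ Finset.range n, breakRatio H (H^[i] x) := by
  induction n with
  | zero =>
    have h1 : ∀ᶠ y in 𝓝 x, (_root_.id : ℝ → ℝ) y = 1 * y + 0 := .of_forall fun y => by simp
    simp [breakRatio, leftSlope_eq_of_eventually (nhdsWithin_le_nhds h1),
      rightSlope_eq_of_eventually (nhdsWithin_le_nhds h1)]
  | succ n ih =>
    rw [iterate_succ', hH.breakRatio_comp (hH.iterate hc hm n) (hc.iterate n) (hm.iterate n),
      ih, Finset.prod_range_succ, mul_comm]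

theorem isBreakPoint_of_breakRatio_ne_one (hH : IsIncreasingPWL H) (hx : breakRatio H x ≠ 1) :
    IsBreakPoint H x := by
  obtain ⟨-, c, hl⟩ := hH.left x
  obtain ⟨hr, c', hr'⟩ := hH.right x
  refine ⟨leftSlope H x, rightSlope H x, fun h => hx ?_,
    hasDerivWithinAt_of_eventually_affine hl self_mem_Iic,
    hasDerivWithinAt_of_eventually_affine hr' self_mem_Ici⟩
  rw [breakRatio, h, div_self hr.ne']

theorem eventually_affine_of_breakRatio_eq_one (hH : IsIncreasingPWL H)
    (hx : breakRatio H x = 1) : ∃ a c, ∀ᶠ y in 𝓝 x, H y = a * y + c := by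
  obtain ⟨-, c, hl⟩ := hH.left x
  obtain ⟨hr, c', hr'⟩ := hH.right x
  have hslope : leftSlope H x = rightSlope H x := (div_eq_one_iff_eq hr.ne').1 hx
  have hc : c = c' := by
    have := (hl.self_of_nhdsWithin self_mem_Iic).symm.trans (hr'.self_of_nhdsWithin self_mem_Ici)
    rw [hslope] at this
    linarith
  subst hc
  rw [← hslope] at hr'
  exact ⟨leftSlope H x, c, by rw [← nhdsLE_sup_nhdsGE, eventually_sup]; exact ⟨hl, hr'⟩⟩

theorem breakRatio_eq_one_of_eventually_affine (hH : IsIncreasingPWL H)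
    (h : ∀ᶠ y in 𝓝 x, H y = a * y + c) : breakRatio H x = 1 := by
  have hl := leftSlope_eq_of_eventually (nhdsWithin_le_nhds h)
  have hr := rightSlope_eq_of_eventually (nhdsWithin_le_nhds h)
  rw [breakRatio, hl, ← hr, div_self (hH.right x).1.ne']

end IsIncreasingPWL

end Slopes

section Affine

variable {H : ℝ → ℝ} {s t : ℝ}

theorem eq_of_eventually_const_on_Ioo {f : ℝ → ℝ} (hf : ∀ y ∈ Ioo s t, ∀ᶠ z in 𝓝 y, f z = f y)
    {x y : ℝ} (hx : x ∈ Ioo s t) (hy : y ∈ Ioo s t) : f x = f y := by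
  have hderiv : ∀ z ∈ Ioo s t, HasDerivAt f 0 z := fun z hz =>
    (hasDerivAt_const z (f z)).congr_of_eventuallyEq (hf z hz)
  exact isOpen_Ioo.is_const_of_deriv_eq_zero isPreconnected_Ioo
    (fun z hz => (hderiv z hz).differentiableAt.differentiableWithinAt)
    (fun z hz => (hderiv z hz).deriv) hx hy

theorem exists_affine_on_Icc (hc : Continuous H) (hst : s < t)
    (h : ∀ y ∈ Ioo s t, ∃ a c, ∀ᶠ z in 𝓝 y, H z = a * z + c) :
    ∃ a c, ∀ y ∈ Icc s t, H y = a * y + c := by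
  have hlocal : ∀ y ∈ Ioo s t, ∀ᶠ z in 𝓝 y,
      deriv H z = deriv H y ∧ H z - deriv H z * z = H y - deriv H y * y := by
    intro y hy
    obtain ⟨a, c, hac⟩ := h y hy
    have hD : ∀ᶠ z in 𝓝 y, deriv H z = a ∧ H z = a * z + c :=
      hac.eventually_nhds.mono fun z hz => ⟨(hasDerivWithinAt_of_eventually_affine
        (s := univ) (by rwa [nhdsWithin_univ]) (mem_univ z)).hasDerivAt univ_mem |>.deriv,
        hz.self_of_nhds⟩
    obtain ⟨hDy, hHy⟩ := hD.self_of_nhds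
    filter_upwards [hD] with z ⟨hDz, hHz⟩
    exact ⟨by rw [hDz, hDy], by rw [hDz, hDy, hHz, hHy]; ring⟩
  obtain ⟨y₀, hy₀⟩ := nonempty_Ioo.2 hst
  set a := deriv H y₀
  set c := H y₀ - a * y₀
  have hIoo : ∀ y ∈ Ioo s t, H y = a * y + c := by
    intro y hy
    have hD := eq_of_eventually_const_on_Ioo (fun z hz => (hlocal z hz).mono fun _ h => h.1) hy hy₀
    have hK := eq_of_eventually_const_on_Ioo (f := fun z => H z - deriv H z * z)
      (fun z hz => (hlocal z hz).mono fun _ h => h.2) hy hy₀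
    rw [hD] at hK
    linarith
  refine ⟨a, c, ?_⟩
  rw [← closure_Ioo hst.ne]
  exact (isClosed_eq hc (by fun_prop)).closure_subset_iff.2 hIoo

theorem exists_pos_affine_on_Icc (hc : Continuous H) (hm : StrictMono H) (hst : s < t)
    (h : ∀ y ∈ Ioo s t, ∃ a c, ∀ᶠ z in 𝓝 y, H z = a * z + c) :
    ∃ a > 0, ∃ c, ∀ y ∈ Icc s t, H y = a * y + c := by
  obtain ⟨a, c, hac⟩ := exists_affine_on_Icc hc hst h
  refine ⟨a, ?_, c, hac⟩
  have := hm hst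
  rw [hac s (left_mem_Icc.2 hst.le), hac t (right_mem_Icc.2 hst.le)] at this
  nlinarith

theorem IsIncreasingPWL.rightSlope_eq_leftSlope (hH : IsIncreasingPWL H) (hc : Continuous H)
    (hst : s < t) (h : ∀ x ∈ Ioo s t, breakRatio H x = 1) :
    rightSlope H s = leftSlope H t := by
  obtain ⟨a, c, hac⟩ := exists_affine_on_Icc hc hst
    fun x hx => hH.eventually_affine_of_breakRatio_eq_one (h x hx)
  rw [rightSlope_eq_of_eventually (a := a) (c := c) (mem_of_superset (Icc_mem_nhdsGE hst) hac),
    leftSlope_eq_of_eventually (a := a) (c := c) (mem_of_superset (Icc_mem_nhdsLE hst) hac)]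

theorem IsIncreasingPWL.prod_breakRatio_eq (hH : IsIncreasingPWL H) (hc : Continuous H)
    (T : Finset ℝ) (hst : s < t) (hT : ↑T ⊆ Ioo s t)
    (h : ∀ x ∈ Ioo s t, x ∉ T → breakRatio H x = 1) :
    ∏ x ∈ T, breakRatio H x = rightSlope H s / leftSlope H t := by
  induction T using Finset.induction_on_max generalizing t with
  | empty =>
    rw [Finset.prod_empty, hH.rightSlope_eq_leftSlope hc hst fun x hx => h x hx (by simp),
      div_self (hH.left t).1.ne']
  | insert a T haT ih =>
    have ha : a ∈ Ioo s t := hT (Finset.mem_insert_self a T)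
    have hTa : ↑T ⊆ Ioo s a := fun x hx =>
      ⟨(hT (Finset.mem_insert_of_mem hx)).1, haT x hx⟩
    have hgap : rightSlope H a = leftSlope H t := hH.rightSlope_eq_leftSlope hc ha.2
      fun x hx => h x ⟨ha.1.trans hx.1, hx.2⟩ fun hxT => by
        rcases Finset.mem_insert.1 hxT with rfl | hxT
        · exact lt_irrefl _ hx.1
        · exact lt_asymm hx.1 (haT x hxT)
    have hprev := ih ha.1 hTa fun x hx hxT => h x ⟨hx.1, hx.2.trans ha.2⟩ fun hxT' => by
      rcases Finset.mem_insert.1 hxT' with rfl | hxT'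
      · exact lt_irrefl _ hx.2
      · exact hxT hxT'
    rw [Finset.prod_insert fun haT' => lt_irrefl a (haT a haT'), hprev, ← hgap, breakRatio]
    have := (hH.left a).1.ne'
    field_simp

end Affine

theorem IsClosed.exists_Ioo_gap {P : Set ℝ} (hP : IsClosed P) {z a b : ℝ} (hz : z ∉ P)
    (ha : a ∈ P) (haz : a ≤ z) (hb : b ∈ P) (hzb : z ≤ b) :
    ∃ u ∈ P, ∃ v ∈ P, u < z ∧ z < v ∧ ∀ x ∈ Ioo u v, x ∉ P := by
  have hbelow : BddAbove (P ∩ Iic z) := ⟨z, fun _ hy => hy.2⟩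
  have habove : BddBelow (P ∩ Ici z) := ⟨z, fun _ hy => hy.2⟩
  obtain ⟨huP, huz⟩ := (hP.inter isClosed_Iic).csSup_mem ⟨a, ha, haz⟩ hbelow
  obtain ⟨hvP, hzv⟩ := (hP.inter isClosed_Ici).csInf_mem ⟨b, hb, hzb⟩ habove
  refine ⟨_, huP, _, hvP, lt_of_le_of_ne huz fun h => hz (h ▸ huP),
    lt_of_le_of_ne hzv fun h => hz (h ▸ hvP), fun x hx hxP => ?_⟩
  rcases le_total x z with hxz | hzx
  · exact (le_csSup hbelow ⟨hxP, hxz⟩).not_gt hx.1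
  · exact (csInf_le habove ⟨hxP, hzx⟩).not_gt hx.2

theorem IsIncreasingPWL.rightSlope_ne_leftSlope_of_fixedPt_gap {G : ℝ → ℝ}
    (hG : IsIncreasingPWL G) (hc : Continuous G) {u v : ℝ} (huv : u < v) (hu : G u = u)
    (hv : G v = v) (hgap : ∀ x ∈ Ioo u v, G x ≠ x) : rightSlope G u ≠ leftSlope G v := by
  intro hslope
  obtain ⟨-, c, hR⟩ := hG.right u
  obtain ⟨-, d, hL⟩ := hG.left v
  obtain ⟨y₁, hy₁, hy₁uv⟩ :=
    ((hR.filter_mono (nhdsWithin_mono u Ioi_subset_Ici_self)).and (Ioo_mem_nhdsGT huv)).exists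
  obtain ⟨y₂, hy₂, hy₂uv⟩ :=
    ((hL.filter_mono (nhdsWithin_mono v Iio_subset_Iic_self)).and (Ioo_mem_nhdsLT huv)).exists
  have hu' := hR.self_of_nhdsWithin self_mem_Ici
  have hv' := hL.self_of_nhdsWithin self_mem_Iic
  set r := rightSlope G u
  -- if the two slopes agreed, `G - id` would change sign between `y₁` and `y₂`
  have hdisp₁ : G y₁ - y₁ = (r - 1) * (y₁ - u) := by
    rw [hy₁]; linear_combination hu - hu'
  have hdisp₂ : G y₂ - y₂ = (r - 1) * (y₂ - v) := by
    rw [hy₂, ← hslope]; rw [← hslope] at hv'; linear_combination hv - hv'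
  have hsign : (G y₁ - y₁) * (G y₂ - y₂) ≤ 0 := by
    rw [hdisp₁, hdisp₂]
    have : (r - 1) * (y₁ - u) * ((r - 1) * (y₂ - v)) = (r - 1) ^ 2 * ((y₁ - u) * (y₂ - v)) := by
      ring
    rw [this]
    exact mul_nonpos_of_nonneg_of_nonpos (sq_nonneg _)
      (mul_nonpos_of_nonneg_of_nonpos (by linarith [hy₁uv.1]) (by linarith [hy₂uv.2]))
  have hzero : (0 : ℝ) ∈ uIcc (G y₁ - y₁) (G y₂ - y₂) := by
    rcases mul_nonpos_iff.1 hsign with ⟨h₁, h₂⟩ | ⟨h₁, h₂⟩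
    · exact mem_uIcc.2 (Or.inr ⟨h₂, h₁⟩)
    · exact mem_uIcc.2 (Or.inl ⟨h₁, h₂⟩)
  obtain ⟨y, hy, hy0⟩ := intermediate_value_uIcc (hc.sub continuous_id).continuousOn hzero
  exact hgap y (ordConnected_Ioo.uIcc_subset hy₁uv hy₂uv hy) (sub_eq_zero.1 hy0)

theorem Equiv.Perm.exists_finprod_zpow_apply_ne_one {α M : Type*} [CommMonoid M]
    (e : Equiv.Perm α) {σ : α → M} {T : Finset α} (hσ : mulSupport σ ⊆ T)
    (hT : ∏ x ∈ T, σ x ≠ 1) (hinj : ∀ x ∈ T, Injective fun m : ℤ => (e ^ m) x) :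
    ∃ d ∈ T, ∏ᶠ m : ℤ, σ ((e ^ m) d) ≠ 1 := by
  classical
  by_contra! h
  refine hT (Finset.prod_cancels_of_partition_cancels (SameCycle.setoid e) fun d hd => ?_)
  rw [← h d hd, ← finprod_mem_range (hinj d hd)]
  refine (finprod_mem_eq_prod_of_subset σ ?_ ?_).symm
  · rintro _ ⟨⟨m, rfl⟩, hσm⟩
    exact Finset.mem_filter.2 ⟨hσ hσm, SameCycle.symm ⟨m, rfl⟩⟩
  · intro x hx
    exact (Finset.mem_filter.1 hx).2.symm

theorem exists_prod_range_eq_finprod {M : Type*} [CommMonoid M] {f : ℤ → M}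
    (hf : (mulSupport f).Finite) (K : ℕ) :
    ∃ a : ℤ, ∃ n > 0, ∀ l < K, ∏ i ∈ Finset.range n, f (a - l + i) = ∏ᶠ m, f m := by
  obtain ⟨N, hN⟩ := (hf.image Int.natAbs).bddAbove
  refine ⟨-N, 2 * N + K + 1, by omega, fun l hl => ?_⟩
  have hsupp : mulSupport f ⊆ ↑(Finset.Ico (-N - l : ℤ) (-N - l + (2 * N + K + 1 : ℕ))) := by
    intro m hm
    have := hN (mem_image_of_mem _ hm)
    simp only [Finset.coe_Ico, mem_Ico]
    omega
  rw [finprod_eq_prod_of_mulSupport_subset f hsupp]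
  refine Finset.prod_nbij' (fun i : ℕ => -N - l + i) (fun m => (m - (-N - l)).toNat)
    ?_ ?_ ?_ ?_ ?_ <;> intros <;> simp_all <;> omega

theorem Equiv.Perm.zpow_apply_mem_Ioo_iff {e : Equiv.Perm ℝ} (hm : StrictMono e) {u v : ℝ}
    (hu : e u = u) (hv : e v = v) (m : ℤ) (x : ℝ) : (e ^ m) x ∈ Ioo u v ↔ x ∈ Ioo u v := by
  have hI : ∀ y, e y ∈ Ioo u v ↔ y ∈ Ioo u v := fun y => by
    conv_lhs => rw [← hu, ← hv]
    simp only [mem_Ioo, hm.lt_iff_lt]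
  induction m using Int.induction_on generalizing x with
  | zero => simp
  | succ k ih => rw [zpow_add_one, mul_apply]; exact (ih _).trans (hI x)
  | pred k ih =>
    rw [zpow_sub_one, mul_apply]
    exact (ih _).trans (by rw [← hI, coe_inv, apply_symm_apply])

theorem Equiv.Perm.injective_zpow_apply_of_strictMono {α : Type*} [LinearOrder α]
    {e : Equiv.Perm α} (hm : StrictMono e) {x : α} (hx : ∀ m : ℤ, e ((e ^ m) x) ≠ (e ^ m) x) :
    Injective fun m : ℤ => (e ^ m) x := by
  intro m m' h
  by_contra hne
  wlog hlt : m < m' generalizing m m'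
  · exact this h.symm (Ne.symm hne) (lt_of_le_of_ne (not_lt.1 hlt) (Ne.symm hne))
  obtain ⟨n, rfl⟩ : ∃ n : ℕ, m' = m + (n + 1) := ⟨(m' - m - 1).toNat, by omega⟩
  have hper : e^[n + 1] ((e ^ m) x) = id^[n + 1] ((e ^ m) x) := by
    rw [iterate_id, id, ← coe_pow, ← mul_apply, ← zpow_natCast, ← zpow_add, add_comm]
    exact_mod_cast h.symm
  exact hx m (((Function.Commute.id_right (f := e)).iterate_pos_eq_iff_map_eq hm.monotone
    strictMono_id n.succ_pos).1 hper)

section FixedPointGap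

variable {e : Equiv.Perm ℝ} {u v : ℝ} (hG : IsIncreasingPWL e) (hc : Continuous e)
  (hm : StrictMono e) (huv : u < v) (hu : e u = u) (hv : e v = v)
  (hgap : ∀ x ∈ Ioo u v, e x ≠ x) (hfin : {x ∈ Ioo u v | breakRatio e x ≠ 1}.Finite)
include hG hc hm huv hu hv hgap hfin

theorem IsIncreasingPWL.exists_finprod_breakRatio_orbit_ne_one :
    ∃ d ∈ Ioo u v, (mulSupport fun m : ℤ => breakRatio e ((e ^ m) d)).Finite ∧
      ∏ᶠ m : ℤ, breakRatio e ((e ^ m) d) ≠ 1 := by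
  have hmem := Equiv.Perm.zpow_apply_mem_Ioo_iff hm hu hv
  have hinj : ∀ x ∈ Ioo u v, Injective fun m : ℤ => (e ^ m) x := fun x hx =>
    Equiv.Perm.injective_zpow_apply_of_strictMono hm fun m => hgap _ ((hmem m x).2 hx)
  set T := hfin.toFinset
  have hT : ∀ x, x ∈ T ↔ x ∈ Ioo u v ∧ breakRatio e x ≠ 1 := fun x => hfin.mem_toFinset
  have hone : ∀ x ∈ Ioo u v, x ∉ T → breakRatio e x = 1 := fun x hx hxT =>
    not_not.1 fun h => hxT ((hT x).2 ⟨hx, h⟩)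
  set σ := (T : Set ℝ).mulIndicator (breakRatio e)
  have hσ : ∀ x ∈ Ioo u v, σ x = breakRatio e x := fun x hx => by
    by_cases hxT : x ∈ T
    · exact mulIndicator_of_mem hxT _
    · rw [show σ x = 1 from mulIndicator_of_notMem hxT _, hone x hx hxT]
  have hprod : ∏ x ∈ T, σ x ≠ 1 := by
    rw [Finset.prod_congr rfl fun x hx => hσ x ((hT x).1 hx).1,
      hG.prod_breakRatio_eq hc T huv (fun x hx => ((hT x).1 hx).1) hone, Ne,
      div_eq_one_iff_eq (hG.left v).1.ne']
    exact hG.rightSlope_ne_leftSlope_of_fixedPt_gap hc huv hu hv hgap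
  obtain ⟨d, hdT, hd⟩ := e.exists_finprod_zpow_apply_ne_one mulSupport_mulIndicator_subset
    hprod fun x hx => hinj x ((hT x).1 hx).1
  have hdI := ((hT d).1 hdT).1
  rw [finprod_congr fun m => hσ _ ((hmem m d).2 hdI)] at hd
  refine ⟨d, hdI, (T.finite_toSet.preimage (hinj d hdI).injOn).subset fun m hm => ?_, hd⟩
  exact (hT _).2 ⟨(hmem m d).2 hdI, hm⟩

theorem IsIncreasingPWL.exists_breakRatio_iterate_ne_one_of_gap (K : ℕ) :
    ∃ n > 0, ∃ C : Finset ℝ, C.card = K ∧ ↑C ⊆ Ioo u v ∧ ∀ x ∈ C, breakRatio e^[n] x ≠ 1 := by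
  obtain ⟨d, hdI, hsupp, hd⟩ :=
    hG.exists_finprod_breakRatio_orbit_ne_one hc hm huv hu hv hgap hfin
  have hmem := Equiv.Perm.zpow_apply_mem_Ioo_iff hm hu hv
  have hinj := Equiv.Perm.injective_zpow_apply_of_strictMono hm fun m => hgap _ ((hmem m d).2 hdI)
  obtain ⟨a, n, hn, hwin⟩ := exists_prod_range_eq_finprod hsupp K
  refine ⟨n, hn, (Finset.range K).image fun l : ℕ => (e ^ (a - l)) d, ?_, ?_, ?_⟩
  · refine (Finset.card_image_of_injective _ fun l l' h => ?_).trans (Finset.card_range K)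
    have := hinj h
    omega
  · intro x hx
    obtain ⟨l, -, rfl⟩ := Finset.mem_image.1 hx
    exact (hmem _ d).2 hdI
  · intro x hx
    obtain ⟨l, hl, rfl⟩ := Finset.mem_image.1 hx
    rw [← hwin l (Finset.mem_range.1 hl)] at hd
    rwa [hG.breakRatio_iterate hc hm.monotone, Finset.prod_congr rfl fun i _ => by
      rw [← Equiv.Perm.coe_pow, ← Equiv.Perm.mul_apply, ← zpow_natCast, ← zpow_add, add_comm]]

end FixedPointGap

theorem Int.injOn_fract_Ioo (u : ℝ) : InjOn Int.fract (Ioo u (u + 1)) := by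
  intro x hx y hy h
  obtain ⟨k, hk⟩ := Int.fract_eq_fract.1 h
  have hlow : (-1 : ℤ) < k := by exact_mod_cast (show (-1 : ℝ) < k by linarith [hx.1, hy.2])
  have hhigh : k < 1 := by exact_mod_cast (show (k : ℝ) < 1 by linarith [hx.2, hy.1])
  rw [show k = 0 by omega, Int.cast_zero, sub_eq_zero] at hk
  exact hk

namespace IsLift

variable {F : ℝ → ℝ}

def toCircleDeg1Lift (hF : IsLift F) : CircleDeg1Lift := ⟨⟨F, hF.2.1.monotone⟩, hF.2.2⟩

@[simp]
theorem coe_toCircleDeg1Lift (hF : IsLift F) : ⇑hF.toCircleDeg1Lift = F := rfl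

theorem map_add_int (hF : IsLift F) (x : ℝ) (m : ℤ) : F (x + m) = F x + m :=
  hF.toCircleDeg1Lift.map_add_int x m

theorem surjective (hF : IsLift F) : Surjective F :=
  hF.toCircleDeg1Lift.continuous_iff_surjective.1 hF.1

theorem iterate (hF : IsLift F) (n : ℕ) : IsLift F^[n] :=
  ⟨hF.1.iterate n, hF.2.1.iterate n, fun x => by
    simpa only [CircleDeg1Lift.coe_pow, coe_toCircleDeg1Lift] using
      (hF.toCircleDeg1Lift ^ n).map_add_one x⟩

theorem sub_int (hF : IsLift F) (p : ℤ) : IsLift fun x => F x - p :=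
  ⟨hF.1.sub continuous_const, fun _ _ h => sub_lt_sub_right (hF.2.1 h) _,
    fun x => by simp only [hF.2.2]; ring⟩

theorem iterate_sub_int (hF : IsLift F) (p : ℤ) (n : ℕ) (x : ℝ) :
    (fun y => F y - p)^[n] x = F^[n] x - n * p := by
  induction n with
  | zero => simp
  | succ n ih =>
    rw [iterate_succ_apply', ih, iterate_succ_apply', sub_eq_add_neg (F^[n] x),
      ← Int.cast_natCast, ← Int.cast_mul, ← Int.cast_neg, hF.map_add_int]
    push_cast
    ring

theorem exists_iterate_eq_add (hF : IsLift F) {p : ℤ} {q : ℕ} (hq : 0 < q)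
    (hrot : HasRotNum F ((p : ℝ) / q)) : ∃ x, F^[q] x = x + p := by
  have hτ : hF.toCircleDeg1Lift.translationNumber = p / q :=
    tendsto_nhds_unique (hF.toCircleDeg1Lift.tendsto_translationNumber 0) <| by
      simpa only [CircleDeg1Lift.coe_pow, coe_toCircleDeg1Lift, sub_zero] using hrot 0
  simpa only [CircleDeg1Lift.coe_pow, coe_toCircleDeg1Lift] using
    (hF.toCircleDeg1Lift.translationNumber_eq_rat_iff hF.1 hq).1 hτ

theorem exists_conj_add_of_iterate_eq_add (hF : IsLift F) {p : ℤ} {q : ℕ} (hq : 0 < q)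
    (hFq : ∀ x, F^[q] x = x + p) : ∃ H : ℝ → ℝ, IsLift H ∧ ∀ x, H (F x) = H x + (p : ℝ) / q := by
  have hq' : (0 : ℝ) < q := Nat.cast_pos.2 hq
  refine ⟨fun x => (∑ i ∈ Finset.range q, F^[i] x) / q, ⟨?_, ?_, ?_⟩, ?_⟩
  · exact (continuous_finsetSum _ fun i _ => hF.1.iterate i).div_const _
  · intro x y hxy
    exact div_lt_div_of_pos_right (Finset.sum_lt_sum_of_nonempty (Finset.nonempty_range_iff.2
      hq.ne') fun i _ => hF.2.1.iterate i hxy) hq'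
  · intro x
    simp only [(hF.iterate _).2.2, Finset.sum_add_distrib, Finset.sum_const, Finset.card_range,
      nsmul_eq_mul, mul_one]
    field_simp
  · intro x
    have hshift := Finset.sum_range_succ' (fun i => F^[i] x) q
    rw [Finset.sum_range_succ, hFq] at hshift
    simp only [iterate_succ_apply, iterate_zero, id] at hshift
    beta_reduce
    rw [show ∑ i ∈ Finset.range q, F^[i] (F x) = ∑ i ∈ Finset.range q, F^[i] x + p by linarith]
    field_simp

end IsLift

theorem IsLift.exists_breakRatio_iterate_ne_one {G : ℝ → ℝ} (hG : IsLift G)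
    (hpwl : IsIncreasingPWL G) (hfin : ∀ s t, {x ∈ Ioo s t | breakRatio G x ≠ 1}.Finite)
    (hfix : ∃ x, G x = x) {z : ℝ} (hz : G z ≠ z) (K : ℕ) :
    ∃ n > 0, ∃ C : Finset ℝ, C.card = K ∧ ↑C ⊆ Ico (0 : ℝ) 1 ∧
      ∀ x ∈ C, breakRatio G^[n] x ≠ 1 := by
  obtain ⟨x₀, hx₀⟩ := hfix
  have hfixInt : ∀ (x : ℝ) (m : ℤ), G x = x → G (x + m) = x + m := fun x m hx => by
    rw [hG.map_add_int, hx]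
  obtain ⟨u, hu, v, hv, huz, hzv, hgap⟩ := (isClosed_eq hG.1 continuous_id).exists_Ioo_gap hz
    (hfixInt x₀ ⌊z - x₀⌋ hx₀) (by linarith [Int.floor_le (z - x₀)])
    (hfixInt x₀ ⌈z - x₀⌉ hx₀) (by linarith [Int.le_ceil (z - x₀)])
  have hvu : v ≤ u + 1 := by
    by_contra! h
    exact hgap (u + 1) ⟨by linarith, h⟩ (by exact_mod_cast hfixInt u 1 hu)
  obtain ⟨n, hn, C, hCcard, hCuv, hC⟩ :=
    IsIncreasingPWL.exists_breakRatio_iterate_ne_one_of_gap (e := .ofBijective G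
      ⟨hG.2.1.injective, hG.surjective⟩) hpwl hG.1 hG.2.1 (huz.trans hzv) hu hv hgap (hfin u v) K
  have hCu : ↑C ⊆ Ioo u (u + 1) := fun x hx => ⟨(hCuv hx).1, (hCuv hx).2.trans_le hvu⟩
  refine ⟨n, hn, C.image Int.fract, ?_, ?_, ?_⟩
  · rw [Finset.card_image_of_injOn ((Int.injOn_fract_Ioo u).mono hCu), hCcard]
  · intro y hy
    obtain ⟨x, -, rfl⟩ := Finset.mem_coe.1 hy |> Finset.mem_image.1
    exact ⟨Int.fract_nonneg x, Int.fract_lt_one x⟩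
  · intro y hy
    obtain ⟨x, hx, rfl⟩ := Finset.mem_image.1 hy
    rw [Int.fract, sub_eq_add_neg, ← Int.cast_neg,
      breakRatio_add_of_map_add fun y => (hG.iterate n).map_add_int y _]
    exact hC x hx

def intTranslates (B : Finset ℝ) : Set ℝ := {y | ∃ b ∈ B, ∃ k : ℤ, y = b + k}

theorem finite_intTranslates_inter_Icc (B : Finset ℝ) (s t : ℝ) :
    (intTranslates B ∩ Icc s t).Finite := by
  refine (B.finite_toSet.biUnion fun b _ =>
    (finite_Icc ⌈s - b⌉ ⌊t - b⌋).image fun k : ℤ => b + k).subset ?_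
  rintro _ ⟨⟨b, hb, k, rfl⟩, hs, ht⟩
  exact mem_biUnion hb ⟨k, ⟨Int.ceil_le.2 (by linarith), Int.le_floor.2 (by linarith)⟩, rfl⟩

theorem eventually_nhdsNE_notMem_intTranslates (B : Finset ℝ) (x : ℝ) :
    ∀ᶠ y in 𝓝[≠] x, y ∉ intTranslates B := by
  have hfin := (finite_intTranslates_inter_Icc B (x - 1) (x + 1)).sdiff (t := {x})
  filter_upwards [nhdsWithin_le_nhds (hfin.isClosed.compl_mem_nhds fun h => h.2 rfl),
    nhdsWithin_le_nhds (Icc_mem_nhds (by linarith : x - 1 < x) (by linarith : x < x + 1)),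
    self_mem_nhdsWithin] with y h1 h2 h3 hy
  exact h1 ⟨⟨hy, h2⟩, h3⟩

namespace IsPWLLift

variable {F : ℝ → ℝ} {B : Finset ℝ}

theorem eventually_affine (hF : IsPWLLift F B) {x : ℝ} (hx : x ∉ intTranslates B) :
    ∃ a c, ∀ᶠ y in 𝓝 x, F y = a * y + c := by
  obtain ⟨ε, hε, a, c, h⟩ := hF.2.2.2 x fun b hb k hxb => hx ⟨b, hb, k, hxb⟩
  exact ⟨a, c, Metric.eventually_nhds_iff.2 ⟨ε, hε, fun y hy => h y hy⟩⟩

theorem isIncreasingPWL (hF : IsPWLLift F B) : IsIncreasingPWL F := by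
  intro x
  have hlocal : ∀ {s t}, Ioo s t ⊆ (intTranslates B)ᶜ →
      ∀ y ∈ Ioo s t, ∃ a c, ∀ᶠ z in 𝓝 y, F z = a * z + c := fun hst y hy =>
    hF.eventually_affine (hst hy)
  have hoff := eventually_nhdsNE_notMem_intTranslates B x
  obtain ⟨l, hlx, hl⟩ := mem_nhdsLT_iff_exists_Ioo_subset.1
    (hoff.filter_mono (nhdsWithin_mono x fun _ h => ne_of_lt h))
  obtain ⟨r, hxr, hr⟩ := mem_nhdsGT_iff_exists_Ioo_subset.1
    (hoff.filter_mono (nhdsWithin_mono x fun _ h => ne_of_gt h))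
  obtain ⟨a, ha, c, hac⟩ := exists_pos_affine_on_Icc hF.1.1 hF.1.2.1 hlx (hlocal hl)
  obtain ⟨a', ha', c', hac'⟩ := exists_pos_affine_on_Icc hF.1.1 hF.1.2.1 hxr (hlocal hr)
  exact ⟨⟨a, ha, c, mem_of_superset (Icc_mem_nhdsLE hlx) hac⟩,
    a', ha', c', mem_of_superset (Icc_mem_nhdsGE hxr) hac'⟩

theorem breakRatio_eq_one (hF : IsPWLLift F B) {x : ℝ} (hx : x ∉ intTranslates B) :
    breakRatio F x = 1 :=
  let ⟨_, _, h⟩ := hF.eventually_affine hx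
  hF.isIncreasingPWL.breakRatio_eq_one_of_eventually_affine h

theorem finite_breakRatio_iterate_ne_one (hF : IsPWLLift F B) (q : ℕ) (s t : ℝ) :
    {x ∈ Ioo s t | breakRatio F^[q] x ≠ 1}.Finite := by
  refine ((Finset.range q).finite_toSet.biUnion fun i _ =>
    (finite_intTranslates_inter_Icc B (F^[i] s) (F^[i] t)).preimage
      (hF.1.2.1.iterate i).injective.injOn).subset ?_
  rintro x ⟨hx, hne⟩
  rw [hF.isIncreasingPWL.breakRatio_iterate hF.1.1 hF.1.2.1.monotone] at hne
  obtain ⟨i, hi, hFi⟩ := Finset.exists_ne_one_of_prod_ne_one hne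
  have hmono := (hF.1.2.1.iterate i).monotone
  exact mem_biUnion hi ⟨not_not.1 fun h => hFi (hF.breakRatio_eq_one h),
    hmono hx.1.le, hmono hx.2.le⟩

end IsPWLLift

theorem IsPWLLift.exists_breakPoints_iterate {F : ℝ → ℝ} {B : Finset ℝ} (hF : IsPWLLift F B)
    {p : ℤ} {q : ℕ} (hq : 0 < q) (hfix : ∃ x, F^[q] x = x + p) {z : ℝ} (hz : F^[q] z ≠ z + p)
    (K : ℕ) :
    ∃ k ≥ 1, ∃ C : Finset ℝ, C.card = K ∧ ↑C ⊆ Ico (0 : ℝ) 1 ∧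
      ∀ c ∈ C, IsBreakPoint (F^[k]) c := by
  have hpwl := hF.isIncreasingPWL.iterate hF.1.1 hF.1.2.1.monotone
  set G := fun x => F^[q] x - p
  have hratio : ∀ n x, breakRatio G^[n] x = breakRatio F^[q * n] x := fun n x => by
    have hiter : G^[n] = fun y => F^[q * n] y + -(n * p) := funext fun y => by
      rw [(hF.1.iterate q).iterate_sub_int p n y, iterate_mul, sub_eq_add_neg]
    rw [hiter, breakRatio_add_const]
  obtain ⟨n, hn, C, hCcard, hC01, hC⟩ :=
    ((hF.1.iterate q).sub_int p).exists_breakRatio_iterate_ne_one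
    (by simpa only [G, sub_eq_add_neg] using (hpwl q).add_const (-p))
    (fun s t => by simpa only [G, sub_eq_add_neg, breakRatio_add_const] using
      hF.finite_breakRatio_iterate_ne_one q s t)
    (hfix.imp fun x hx => sub_eq_of_eq_add hx) (fun h => hz (eq_add_of_sub_eq h)) K
  refine ⟨q * n, Nat.one_le_iff_ne_zero.2 (by positivity), C, hCcard, hC01, fun c hc => ?_⟩
  exact (hpwl (q * n)).isBreakPoint_of_breakRatio_ne_one (hratio n c ▸ hC c hc)

/-- if the number of break points of the iterates `f^k` of a PWL circle
homeomorphism with rotation number `p/q` is uniformly bounded, then every break point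
is periodic (of period `q`) and `f` is conjugate to the rigid rotation by `p/q`. -/
theorem stmt8 (F : ℝ → ℝ) (B : Finset ℝ) (p : ℤ) (q : ℕ) (hq : 0 < q)
    (hF : IsPWLLift F B) (hrot : HasRotNum F ((p : ℝ) / q))
    (hbdd : ∃ N : ℕ, ∀ k : ℕ, 1 ≤ k → ∀ C : Finset ℝ,
      (↑C : Set ℝ) ⊆ Set.Ico (0 : ℝ) 1 →
      (∀ c ∈ C, IsBreakPoint (F^[k]) c) → C.card ≤ N) :
    (∀ b ∈ B, F^[q] b = b + p) ∧
    ∃ H : ℝ → ℝ, IsLift H ∧ ∀ x, H (F x) = H x + (p : ℝ) / q := by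
  obtain ⟨N, hN⟩ := hbdd
  have hFq : ∀ x, F^[q] x = x + p := by
    by_contra! ⟨z, hz⟩
    obtain ⟨k, hk, C, hCcard, hC01, hC⟩ :=
      hF.exists_breakPoints_iterate hq (hF.1.exists_iterate_eq_add hq hrot) hz (N + 1)
    have := hN k hk C hC01 hC
    omega
  exact ⟨fun b _ => hFq b, hF.1.exists_conj_add_of_iterate_eq_add hq hFq⟩
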